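/- Let (Ω,μ) = ∏_{i=1}^n (Ω_i,μ_i) be a finite product probability space in which each factor Ω_i is partially ordered and each μ_i is positively associated. Let A_1,…,A_k ⊆ Ω be events that are all increasing, define X(ω) = max{|I| : I ⊆ [k] and A_i, i ∈ I, occur disjointly at ω}, and set λ = Σ_{i=1}^k μ(A_i). Then for every t ≥ 0, μ({ω : X(ω) ≥ λ + t}) ≤ exp(−λ φ(t/λ)), where φ(x) = (1+x)log(1+x) − x. -/

import Mathlib

open MeasureTheory ProbabilityTheory

/-- The events `A j`, `j ∈ I`, occur disjointly at `ω`: there are pairwise disjoint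
sets `S j ⊆ [n]` such that every `ω'` agreeing with `ω` on `S j` lies in `A j`. -/
def OccurDisjointly {n : ℕ} {Ω : Fin n → Type*} {ι : Type*}
    (A : ι → Set (∀ i, Ω i)) (I : Finset ι) (ω : ∀ i, Ω i) : Prop :=
  ∃ S : ι → Finset (Fin n),
    (∀ j ∈ I, ∀ j' ∈ I, j ≠ j' → Disjoint (S j) (S j')) ∧
    ∀ j ∈ I, ∀ ω' : ∀ i, Ω i, (∀ i ∈ S j, ω' i = ω i) → ω' ∈ A j

/-- `X ω` is the maximum size of a set `I ⊆ [k]` such that the events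
`A j`, `j ∈ I`, occur disjointly at `ω`. -/
noncomputable def maxDisjOcc {n k : ℕ} {Ω : Fin n → Type*}
    (A : Fin k → Set (∀ i, Ω i)) (ω : ∀ i, Ω i) : ℕ :=
  sSup {m : ℕ | ∃ I : Finset (Fin k), I.card = m ∧ OccurDisjointly A I ω}

/-- A probability measure on a partially ordered space is positively associated if
`m A * m B ≤ m (A ∩ B)` for all increasing (upper) sets `A, B`. -/
def PositivelyAssociated {Γ : Type*} [Preorder Γ] [MeasurableSpace Γ]
    (m : Measure Γ) : Prop :=
  ∀ A B : Set Γ, IsUpperSet A → IsUpperSet B → m A * m B ≤ m (A ∩ B)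

/-- The Chernoff rate function `φ(x) = (1+x) log (1+x) − x`. -/
noncomputable def chernoffPhi (x : ℝ) : ℝ := (1 + x) * Real.log (1 + x) - x

/-!
The van den Berg–Kesten inequality `μ (A □ B) ≤ μ A * μ B` for increasing events extends from
product measures to products of positively associated factors. One inducts on the number of
coordinates and conditions on the first one: for each value `y` of it, `A □ B` is covered by two
events according to which witness uses the first coordinate, and positive association of the first
factor decouples the two values of `y` that appear. Iterating, the events `A j`, `j ∈ I`, occur
disjointly with probability at most `∏ j ∈ I, μ (A j)`. Since `(1 + u) ^ X` is at most the sum of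
`u ^ #I` over the sets `I` occurring disjointly, the moment generating function of `X` is at most
`∏ j, (1 + u μ (A j)) ≤ exp (λ u)`, that of a Poisson variable of mean `λ`, and the Chernoff bound
with `1 + u = 1 + t / λ` gives the claim.
-/

open Finset Real

section DisjointOccurrence

variable {ι : Type*} {Ω : ι → Type*}

def occursOn (A : Set (∀ i, Ω i)) (S : Set ι) : Set (∀ i, Ω i) :=
  {ω | ∀ ω' : ∀ i, Ω i, (∀ i ∈ S, ω' i = ω i) → ω' ∈ A}

/-- `A □ B` in the usual notation. -/
def disjOcc (A B : Set (∀ i, Ω i)) : Set (∀ i, Ω i) :=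
  {ω | ∃ S T : Set ι, Disjoint S T ∧ ω ∈ occursOn A S ∧ ω ∈ occursOn B T}

theorem occursOn_subset (A : Set (∀ i, Ω i)) (S : Set ι) : occursOn A S ⊆ A :=
  fun ω h => h ω fun _ _ => rfl

theorem occursOn_mono {A A' : Set (∀ i, Ω i)} (h : A ⊆ A') (S : Set ι) :
    occursOn A S ⊆ occursOn A' S :=
  fun _ hω ω' hω' => h (hω ω' hω')

theorem occursOn_iInter {κ : Type*} (A : κ → Set (∀ i, Ω i)) (S : Set ι) :
    occursOn (⋂ y, A y) S = ⋂ y, occursOn (A y) S := by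
  ext ω
  simp only [occursOn, Set.mem_iInter, Set.mem_ofPred_eq]
  exact ⟨fun h y ω' hω' => h ω' hω' y, fun h ω' hω' y => h y ω' hω'⟩

theorem mem_occursOn_of_eqOn {A : Set (∀ i, Ω i)} {S : Set ι} {ω ω' : ∀ i, Ω i}
    (h : ∀ i ∈ S, ω' i = ω i) (hω : ω ∈ occursOn A S) : ω' ∈ occursOn A S :=
  fun ω'' h'' => hω ω'' fun i hi => (h'' i hi).trans (h i hi)

theorem IsUpperSet.occursOn [∀ i, Preorder (Ω i)] {A : Set (∀ i, Ω i)} (hA : IsUpperSet A)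
    (S : Set ι) : IsUpperSet (occursOn A S) := by
  classical
  intro ω σ hωσ hω σ' hσ'
  refine hA (fun i => ?_) (hω (S.piecewise ω σ') fun i hi => S.piecewise_eq_of_mem _ _ hi)
  by_cases hi : i ∈ S
  · simpa [hi, hσ' i hi] using hωσ i
  · simp [hi]

theorem disjOcc_comm (A B : Set (∀ i, Ω i)) : disjOcc A B = disjOcc B A := by
  ext ω
  constructor <;> exact fun ⟨S, T, hST, hS, hT⟩ => ⟨T, S, hST.symm, hT, hS⟩

theorem disjOcc_subset_inter (A B : Set (∀ i, Ω i)) : disjOcc A B ⊆ A ∩ B :=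
  fun _ ⟨S, T, _, hS, hT⟩ => ⟨occursOn_subset A S hS, occursOn_subset B T hT⟩

theorem disjOcc_mono {A A' B B' : Set (∀ i, Ω i)} (hA : A ⊆ A') (hB : B ⊆ B') :
    disjOcc A B ⊆ disjOcc A' B' :=
  fun _ ⟨S, T, hST, hS, hT⟩ => ⟨S, T, hST, occursOn_mono hA S hS, occursOn_mono hB T hT⟩

end DisjointOccurrence

section FirstCoordinate

variable {n : ℕ} {Ω : Fin (n + 1) → Type*}

theorem mem_occursOn_preimage_cons {A : Set (∀ i, Ω i)} {S : Set (Fin (n + 1))} {y : Ω 0}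
    {x : ∀ i : Fin n, Ω i.succ} (h : Fin.cons y x ∈ occursOn A S) :
    x ∈ occursOn (Fin.cons y ⁻¹' A) (Fin.succ ⁻¹' S) := by
  intro x' hx'
  refine h _ fun i hi => ?_
  cases i using Fin.cases with
  | zero => rfl
  | succ j => simpa using hx' j hi

theorem mem_disjOcc_preimage_cons_iInter {A B : Set (∀ i, Ω i)} {S T : Set (Fin (n + 1))}
    {y : Ω 0} {x : ∀ i : Fin n, Ω i.succ} (hST : Disjoint S T)
    (hS : Fin.cons y x ∈ occursOn A S) (hT : Fin.cons y x ∈ occursOn B T) (h0 : 0 ∉ T) :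
    x ∈ disjOcc (Fin.cons y ⁻¹' A) (⋂ y', Fin.cons y' ⁻¹' B) := by
  refine ⟨_, _, hST.preimage Fin.succ, mem_occursOn_preimage_cons hS, ?_⟩
  rw [occursOn_iInter]
  refine Set.mem_iInter.2 fun y' => mem_occursOn_preimage_cons (mem_occursOn_of_eqOn ?_ hT)
  intro i hi
  cases i using Fin.cases with
  | zero => exact absurd hi h0
  | succ j => simp

/-- Whichever of the two witnesses avoids coordinate `0` keeps witnessing its event whatever the
value of that coordinate. -/
theorem preimage_cons_disjOcc_subset (A B : Set (∀ i, Ω i)) (y : Ω 0) :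
    Fin.cons y ⁻¹' disjOcc A B ⊆
      disjOcc (Fin.cons y ⁻¹' A) (⋂ y', Fin.cons y' ⁻¹' B) ∪
        disjOcc (⋂ y', Fin.cons y' ⁻¹' A) (Fin.cons y ⁻¹' B) := by
  rintro x ⟨S, T, hST, hS, hT⟩
  by_cases h0 : 0 ∈ T
  · right
    rw [disjOcc_comm]
    exact mem_disjOcc_preimage_cons_iInter hST.symm hT hS (hST.notMem_of_mem_right h0)
  · exact Or.inl (mem_disjOcc_preimage_cons_iInter hST hS hT h0)

theorem monotone_preimage_cons [∀ i, Preorder (Ω i)] {A : Set (∀ i, Ω i)} (hA : IsUpperSet A) :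
    Monotone fun y : Ω 0 => (Fin.cons y ⁻¹' A : Set (∀ i : Fin n, Ω i.succ)) :=
  fun _ _ hy _ hx => hA (Fin.cons_le_cons.2 ⟨hy, le_rfl⟩) hx

theorem IsUpperSet.preimage_cons [∀ i, Preorder (Ω i)] {A : Set (∀ i, Ω i)}
    (hA : IsUpperSet A) (y : Ω 0) : IsUpperSet (Fin.cons y ⁻¹' A : Set (∀ i : Fin n, Ω i.succ)) :=
  fun _ _ hx h => hA (Fin.cons_le_cons.2 ⟨le_rfl, hx⟩) h

end FirstCoordinate

section WeightMass

variable {α : Type*} [Fintype α]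

noncomputable def weightMass (q : α → ℝ) (s : Set α) : ℝ :=
  ∑ a, s.indicator q a

theorem weightMass_mono {q : α → ℝ} (hq : 0 ≤ q) {s t : Set α} (h : s ⊆ t) :
    weightMass q s ≤ weightMass q t :=
  sum_le_sum fun a _ => Set.indicator_le_indicator_of_subset h (fun a => hq a) a

theorem weightMass_union_add_inter (q : α → ℝ) (s t : Set α) :
    weightMass q (s ∪ t) + weightMass q (s ∩ t) = weightMass q s + weightMass q t := by
  simp only [weightMass, ← sum_add_distrib]
  exact sum_congr rfl fun a _ => Set.indicator_union_add_inter_apply q s t a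

structure IsPAWeight [Preorder α] (m : α → ℝ) : Prop where
  nonneg : 0 ≤ m
  sum_eq_one : ∑ a, m a = 1
  mul_le_inter : ∀ U V : Set α, IsUpperSet U → IsUpperSet V →
    weightMass m U * weightMass m V ≤ weightMass m (U ∩ V)

end WeightMass

section ProdWeight

def prodWeight {ι : Type*} [Fintype ι] {Ω : ι → Type*} (w : ∀ i, Ω i → ℝ) (ω : ∀ i, Ω i) : ℝ :=
  ∏ i, w i (ω i)

theorem prodWeight_nonneg {ι : Type*} [Fintype ι] {Ω : ι → Type*} {w : ∀ i, Ω i → ℝ}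
    (hw : ∀ i, 0 ≤ w i) : 0 ≤ prodWeight w :=
  fun _ => prod_nonneg fun i _ => hw i _

variable {n : ℕ} {Ω : Fin (n + 1) → Type*}

theorem prodWeight_cons (w : ∀ i, Ω i → ℝ) (y : Ω 0) (x : ∀ i : Fin n, Ω i.succ) :
    prodWeight w (Fin.cons y x) = w 0 y * prodWeight (fun i : Fin n => w i.succ) x := by
  simp [prodWeight, Fin.prod_univ_succ]

theorem weightMass_prodWeight_eq_sum_cons [∀ i, Fintype (Ω i)] (w : ∀ i, Ω i → ℝ)
    (s : Set (∀ i, Ω i)) :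
    weightMass (prodWeight w) s =
      ∑ y, w 0 y * weightMass (prodWeight fun i : Fin n => w i.succ) (Fin.cons y ⁻¹' s) := by
  rw [weightMass, ← (Fin.consEquiv Ω).sum_comp, Fintype.sum_prod_type]
  refine sum_congr rfl fun y _ => ?_
  rw [weightMass, mul_sum]
  refine sum_congr rfl fun x _ => ?_
  change s.indicator _ (Fin.cons y x) = _
  by_cases h : Fin.cons y x ∈ s
  · simp [h, prodWeight_cons]
  · simp [h]

end ProdWeight

section Harris

variable {Λ P : Type*} [Fintype Λ] [Preorder Λ] [Fintype P] {m : Λ → ℝ}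

theorem IsPAWeight.sum_sum_mul_weightMass_inter_le (hm : IsPAWeight m) {q : P → ℝ} (hq : 0 ≤ q)
    {C E : Λ → Set P} (hC : Monotone C) (hE : Monotone E) :
    ∑ y, ∑ y', m y * m y' * weightMass q (C y ∩ E y') ≤ ∑ y, m y * weightMass q (C y ∩ E y) := by
  classical
  -- both sides are `∑ x, q x * _`, compared by positive association on the upper sets
  -- `{y | x ∈ C y}` and `{y | x ∈ E y}`
  have hL : ∑ y, ∑ y', m y * m y' * weightMass q (C y ∩ E y') =
      ∑ x, q x * (weightMass m {y | x ∈ C y} * weightMass m {y | x ∈ E y}) := by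
    simp only [weightMass, Finset.sum_mul_sum]
    simp only [mul_sum]
    conv_rhs => rw [Finset.sum_comm]; enter [2, y]; rw [Finset.sum_comm]
    refine sum_congr rfl fun y _ => sum_congr rfl fun y' _ => sum_congr rfl fun x _ => ?_
    simp only [Set.indicator_apply, Set.mem_inter_iff, Set.mem_ofPred_eq]
    split_ifs <;> simp_all [mul_comm]
  have hR : ∑ y, m y * weightMass q (C y ∩ E y) =
      ∑ x, q x * weightMass m ({y | x ∈ C y} ∩ {y | x ∈ E y}) := by
    simp only [weightMass, mul_sum]
    rw [Finset.sum_comm]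
    refine sum_congr rfl fun x _ => sum_congr rfl fun y _ => ?_
    simp only [Set.indicator_apply, Set.mem_inter_iff, Set.mem_ofPred_eq]
    split_ifs <;> simp_all [mul_comm]
  rw [hL, hR]
  gcongr with x
  · exact hq x
  · exact hm.mul_le_inter _ _ (fun _ _ hy hx => hC hy hx) (fun _ _ hy hx => hE hy hx)

theorem IsPAWeight.sum_mul_weightMass_union_le (hm : IsPAWeight m) {q : P → ℝ} (hq : 0 ≤ q)
    {C E : Λ → Set P} (hC : Monotone C) (hE : Monotone E) :
    ∑ y, m y * weightMass q (C y ∪ E y) ≤ ∑ y, ∑ y', m y * m y' * weightMass q (C y ∪ E y') := by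
  have hunion : ∀ y y', weightMass q (C y ∪ E y') =
      weightMass q (C y) + weightMass q (E y') - weightMass q (C y ∩ E y') :=
    fun y y' => eq_sub_of_add_eq (weightMass_union_add_inter q _ _)
  have hleft (f : Λ → ℝ) : ∑ y, ∑ y', m y * m y' * f y = ∑ y, m y * f y := by
    simp_rw [mul_right_comm (m _) (m _), ← mul_sum, hm.sum_eq_one, mul_one]
  have hright (f : Λ → ℝ) : ∑ y, ∑ y', m y * m y' * f y' = ∑ y, m y * f y := by
    simp_rw [mul_assoc, ← mul_sum, ← sum_mul, hm.sum_eq_one, one_mul]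
  simp only [hunion, mul_sub, mul_add, sum_sub_distrib, sum_add_distrib, hleft, hright]
  linarith [hm.sum_sum_mul_weightMass_inter_le hq hC hE]

end Harris

theorem weightMass_disjOcc_le {n : ℕ} {Ω : Fin n → Type*} [∀ i, Fintype (Ω i)]
    [∀ i, Preorder (Ω i)] {w : ∀ i, Ω i → ℝ} (hw : ∀ i, IsPAWeight (w i))
    {A B : Set (∀ i, Ω i)} (hA : IsUpperSet A) (hB : IsUpperSet B) :
    weightMass (prodWeight w) (disjOcc A B) ≤
      weightMass (prodWeight w) A * weightMass (prodWeight w) B := by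
  induction n with
  | zero =>
    have h1 : prodWeight w = 1 := funext fun _ => Fin.prod_univ_zero _
    calc weightMass (prodWeight w) (disjOcc A B)
        ≤ weightMass (prodWeight w) (A ∩ B) :=
          weightMass_mono (h1 ▸ zero_le_one) (disjOcc_subset_inter A B)
      _ = weightMass (prodWeight w) A * weightMass (prodWeight w) B := by
        simp only [weightMass, h1, Fintype.sum_unique, Set.inter_indicator_one, Pi.mul_apply]
  | succ n ih =>
    set m := w 0
    set ν := weightMass (prodWeight fun i : Fin n => w i.succ)
    set C := fun y => disjOcc (Fin.cons y ⁻¹' A) (⋂ y', Fin.cons y' ⁻¹' B)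
    set E := fun y => disjOcc (⋂ y', Fin.cons y' ⁻¹' A) (Fin.cons y ⁻¹' B)
    have hν : 0 ≤ prodWeight fun i : Fin n => w i.succ :=
      prodWeight_nonneg fun i => (hw i.succ).nonneg
    have hC : Monotone C := fun y y' h =>
      disjOcc_mono (monotone_preimage_cons hA h) subset_rfl
    have hE : Monotone E := fun y y' h =>
      disjOcc_mono subset_rfl (monotone_preimage_cons hB h)
    calc weightMass (prodWeight w) (disjOcc A B)
        = ∑ y, m y * ν (Fin.cons y ⁻¹' disjOcc A B) := weightMass_prodWeight_eq_sum_cons w _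
      _ ≤ ∑ y, m y * ν (C y ∪ E y) := by
        gcongr with y
        · exact (hw 0).nonneg y
        · exact weightMass_mono hν (preimage_cons_disjOcc_subset A B y)
      _ ≤ ∑ y, ∑ y', m y * m y' * ν (C y ∪ E y') :=
        (hw 0).sum_mul_weightMass_union_le hν hC hE
      _ ≤ ∑ y, ∑ y', m y * m y' * (ν (Fin.cons y ⁻¹' A) * ν (Fin.cons y' ⁻¹' B)) := by
        gcongr with y _ y'
        · exact mul_nonneg ((hw 0).nonneg y) ((hw 0).nonneg y')
        · refine (weightMass_mono hν ?_).trans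
            (ih (fun i => hw i.succ) (hA.preimage_cons y) (hB.preimage_cons y'))
          exact Set.union_subset (disjOcc_mono subset_rfl (Set.iInter_subset _ y'))
            (disjOcc_mono (Set.iInter_subset _ y) subset_rfl)
      _ = weightMass (prodWeight w) A * weightMass (prodWeight w) B := by
        rw [weightMass_prodWeight_eq_sum_cons w A, weightMass_prodWeight_eq_sum_cons w B,
          sum_mul_sum]
        exact sum_congr rfl fun y _ => sum_congr rfl fun y' _ => by ring

section MeasureToWeight

variable {α : Type*} [Fintype α] [MeasurableSpace α] [MeasurableSingletonClass α]

theorem measureReal_eq_weightMass (μ : Measure α) [IsFiniteMeasure μ] (s : Set α) :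
    μ.real s = weightMass (fun a => μ.real {a}) s := by
  classical
  simp [weightMass, Set.indicator_apply, ← sum_filter]

theorem PositivelyAssociated.isPAWeight [Preorder α] {μ : Measure α} [IsProbabilityMeasure μ]
    (h : PositivelyAssociated μ) : IsPAWeight fun a => μ.real {a} where
  nonneg _ := measureReal_nonneg
  sum_eq_one := by simp
  mul_le_inter U V hU hV := by
    rw [← measureReal_eq_weightMass, ← measureReal_eq_weightMass, ← measureReal_eq_weightMass,
      measureReal_def, measureReal_def, measureReal_def, ← ENNReal.toReal_mul]
    exact ENNReal.toReal_mono (measure_ne_top μ _) (h U V hU hV)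

theorem measureReal_pi_eq_weightMass {ι : Type*} [Fintype ι] [DecidableEq ι] {Ω : ι → Type*}
    [∀ i, Fintype (Ω i)] [∀ i, MeasurableSpace (Ω i)] [∀ i, MeasurableSingletonClass (Ω i)]
    (μ : ∀ i, Measure (Ω i)) [∀ i, IsFiniteMeasure (μ i)] (s : Set (∀ i, Ω i)) :
    (Measure.pi μ).real s = weightMass (prodWeight fun i a => (μ i).real {a}) s := by
  rw [measureReal_eq_weightMass]
  congr with ω
  simp [measureReal_def, prodWeight, ENNReal.toReal_prod]

end MeasureToWeight

section DisjointOccurrenceOfFamilies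

variable {n : ℕ} {Ω : Fin n → Type*} {κ : Type*}

theorem OccurDisjointly.mono {A : κ → Set (∀ i, Ω i)} {I J : Finset κ} {ω : ∀ i, Ω i}
    (h : OccurDisjointly A I ω) (hJI : J ⊆ I) : OccurDisjointly A J ω :=
  let ⟨S, hS, hA⟩ := h
  ⟨S, fun j hj j' hj' => hS j (hJI hj) j' (hJI hj'), fun j hj => hA j (hJI hj)⟩

theorem isUpperSet_setOf_occurDisjointly [∀ i, Preorder (Ω i)] {A : κ → Set (∀ i, Ω i)}
    (hA : ∀ j, IsUpperSet (A j)) (I : Finset κ) : IsUpperSet {ω | OccurDisjointly A I ω} :=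
  fun _ _ h ⟨S, hS, hAS⟩ => ⟨S, hS, fun j hj => (hA j).occursOn (S j : Set (Fin n)) h (hAS j hj)⟩

theorem setOf_occurDisjointly_insert_subset [DecidableEq κ] (A : κ → Set (∀ i, Ω i))
    {I : Finset κ} {j : κ} (hj : j ∉ I) :
    {ω | OccurDisjointly A (insert j I) ω} ⊆ disjOcc (A j) {ω | OccurDisjointly A I ω} := by
  rintro ω ⟨S, hS, hA⟩
  refine ⟨S j, ⋃ j' ∈ I, S j', ?_, hA j (mem_insert_self j I), ?_⟩
  · refine Set.disjoint_iUnion₂_right.2 fun j' hj' => Finset.disjoint_coe.2 ?_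
    exact hS j (mem_insert_self j I) j' (mem_insert_of_mem hj') fun h => hj (h ▸ hj')
  · refine fun ω' hω' => ⟨S, fun a ha b hb => hS a (mem_insert_of_mem ha) b (mem_insert_of_mem hb),
      fun j' hj' ω'' hω'' => hA j' (mem_insert_of_mem hj') ω'' fun i hi => ?_⟩
    exact (hω'' i hi).trans (hω' i (Set.mem_iUnion₂.2 ⟨j', hj', hi⟩))

theorem exists_card_eq_maxDisjOcc {k : ℕ} (A : Fin k → Set (∀ i, Ω i)) (ω : ∀ i, Ω i) :
    ∃ I : Finset (Fin k), #I = maxDisjOcc A ω ∧ OccurDisjointly A I ω :=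
  Nat.sSup_mem (s := {m | ∃ I : Finset (Fin k), #I = m ∧ OccurDisjointly A I ω})
    ⟨0, ∅, card_empty, fun _ => ∅, by simp, by simp⟩
    ⟨k, fun _ ⟨I, hI, _⟩ => hI ▸ (card_le_univ I).trans_eq (Fintype.card_fin k)⟩

theorem one_add_pow_maxDisjOcc_le {k : ℕ} (A : Fin k → Set (∀ i, Ω i)) {u : ℝ} (hu : 0 ≤ u)
    (ω : ∀ i, Ω i) :
    (1 + u) ^ maxDisjOcc A ω ≤
      ∑ I : Finset (Fin k), {ω | OccurDisjointly A I ω}.indicator (fun _ => u ^ #I) ω := by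
  obtain ⟨I, hI, hω⟩ := exists_card_eq_maxDisjOcc A ω
  calc (1 + u) ^ maxDisjOcc A ω = ∑ J ∈ I.powerset, u ^ #J := by
        rw [← hI, ← prod_const, prod_one_add]
        simp
    _ = ∑ J ∈ I.powerset, {ω | OccurDisjointly A J ω}.indicator (fun _ => u ^ #J) ω :=
        sum_congr rfl fun J hJ => (Set.indicator_of_mem (s := {ω | OccurDisjointly A J ω})
          (hω.mono (mem_powerset.1 hJ)) fun _ => u ^ #J).symm
    _ ≤ _ := sum_le_sum_of_subset_of_nonneg (subset_univ _)
        fun J _ _ => Set.indicator_nonneg (fun _ _ => pow_nonneg hu _) _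

end DisjointOccurrenceOfFamilies

section ProductMeasure

variable {n : ℕ} {Ω : Fin n → Type*} [∀ i, Fintype (Ω i)] [∀ i, Preorder (Ω i)]
  [∀ i, MeasurableSpace (Ω i)] [∀ i, MeasurableSingletonClass (Ω i)]
  {μ : ∀ i, Measure (Ω i)} [∀ i, IsProbabilityMeasure (μ i)]

theorem measureReal_pi_disjOcc_le (hμ : ∀ i, PositivelyAssociated (μ i))
    {A B : Set (∀ i, Ω i)} (hA : IsUpperSet A) (hB : IsUpperSet B) :
    (Measure.pi μ).real (disjOcc A B) ≤ (Measure.pi μ).real A * (Measure.pi μ).real B := by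
  simp only [measureReal_pi_eq_weightMass]
  exact weightMass_disjOcc_le (fun i => (hμ i).isPAWeight) hA hB

theorem measureReal_pi_occurDisjointly_le_prod {κ : Type*} [DecidableEq κ]
    (hμ : ∀ i, PositivelyAssociated (μ i)) {A : κ → Set (∀ i, Ω i)}
    (hA : ∀ j, IsUpperSet (A j)) (I : Finset κ) :
    (Measure.pi μ).real {ω | OccurDisjointly A I ω} ≤ ∏ j ∈ I, (Measure.pi μ).real (A j) := by
  induction I using Finset.induction_on with
  | empty => simp [measureReal_le_one]
  | insert j I hj ih =>
    rw [prod_insert hj]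
    calc (Measure.pi μ).real {ω | OccurDisjointly A (insert j I) ω}
        ≤ (Measure.pi μ).real (disjOcc (A j) {ω | OccurDisjointly A I ω}) :=
          measureReal_mono (setOf_occurDisjointly_insert_subset A hj)
      _ ≤ (Measure.pi μ).real (A j) * (Measure.pi μ).real {ω | OccurDisjointly A I ω} :=
          measureReal_pi_disjOcc_le hμ (hA j) (isUpperSet_setOf_occurDisjointly hA I)
      _ ≤ (Measure.pi μ).real (A j) * ∏ j ∈ I, (Measure.pi μ).real (A j) := by gcongr

theorem mgf_maxDisjOcc_le {k : ℕ} (hμ : ∀ i, PositivelyAssociated (μ i))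
    {A : Fin k → Set (∀ i, Ω i)} (hA : ∀ j, IsUpperSet (A j)) {s : ℝ} (hs : 0 ≤ s) :
    mgf (fun ω => (maxDisjOcc A ω : ℝ)) (Measure.pi μ) s ≤
      exp ((∑ j, (Measure.pi μ).real (A j)) * (exp s - 1)) := by
  set P := Measure.pi μ
  set u := exp s - 1
  have hu : 0 ≤ u := sub_nonneg.2 (one_le_exp hs)
  calc mgf (fun ω => (maxDisjOcc A ω : ℝ)) P s = ∫ ω, (1 + u) ^ maxDisjOcc A ω ∂P := by
        simp [mgf, u, ← exp_nat_mul, mul_comm]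
    _ ≤ ∫ ω, ∑ I : Finset (Fin k), {ω | OccurDisjointly A I ω}.indicator (fun _ => u ^ #I) ω ∂P :=
        integral_mono .of_finite .of_finite (one_add_pow_maxDisjOcc_le A hu)
    _ = ∑ I : Finset (Fin k), P.real {ω | OccurDisjointly A I ω} * u ^ #I := by
        rw [integral_finsetSum _ fun I _ => .of_finite]
        simp [integral_indicator_const _ MeasurableSet.of_discrete]
    _ ≤ ∑ I : Finset (Fin k), (∏ j ∈ I, P.real (A j)) * u ^ #I := by
        gcongr with I
        exact measureReal_pi_occurDisjointly_le_prod hμ hA I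
    _ = ∏ j, (1 + u * P.real (A j)) := by
        rw [prod_one_add, powerset_univ]
        simp [prod_mul_distrib, mul_comm]
    _ ≤ exp (∑ j, u * P.real (A j)) :=
        prod_one_add_le_exp_sum _ fun _ => mul_nonneg hu measureReal_nonneg
    _ = exp ((∑ j, P.real (A j)) * (exp s - 1)) := by rw [← mul_sum, mul_comm]

end ProductMeasure

/-- Also true for `lam = 0`, where `t / lam = 0`. -/
theorem mul_chernoffPhi_div (lam t : ℝ) :
    lam * chernoffPhi (t / lam) = (lam + t) * log (1 + t / lam) - lam * (t / lam) := by
  rcases eq_or_ne lam 0 with rfl | h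
  · simp
  · rw [chernoffPhi]
    field_simp

/-- **Chernoff-type upper tail bound for disjoint occurrence of increasing events.**
In a finite product probability space with positively associated factors, if
`A 1, …, A k` are increasing events, `X` is the maximal number of them occurring
disjointly, and `λ = Σ μ(A i)`, then for `t ≥ 0`,
`Pr(X ≥ λ + t) ≤ exp(−λ φ(t/λ))`. -/
theorem extended_BK_chernoff
    {n k : ℕ} {Ω : Fin n → Type*}
    [∀ i, Fintype (Ω i)] [∀ i, PartialOrder (Ω i)]
    [∀ i, MeasurableSpace (Ω i)] [∀ i, MeasurableSingletonClass (Ω i)]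
    (μi : ∀ i, Measure (Ω i)) [∀ i, IsProbabilityMeasure (μi i)]
    (hPA : ∀ i, PositivelyAssociated (μi i))
    (A : Fin k → Set (∀ i, Ω i))
    (hA : ∀ j, IsUpperSet (A j))
    (lam : ℝ) (hlam : lam = ∑ i, (Measure.pi μi (A i)).toReal) :
    ∀ t : ℝ, 0 ≤ t →
      (Measure.pi μi {ω | lam + t ≤ (maxDisjOcc A ω : ℝ)}).toReal ≤
        Real.exp (-(lam * chernoffPhi (t / lam))) := by
  intro t ht
  have hlam₀ : 0 ≤ lam := hlam ▸ sum_nonneg fun _ _ => ENNReal.toReal_nonneg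
  set s := log (1 + t / lam) with hs_def
  have hexp : exp s = 1 + t / lam := exp_log (by positivity)
  have hs : 0 ≤ s := log_nonneg (le_add_of_nonneg_right (by positivity))
  calc (Measure.pi μi {ω | lam + t ≤ (maxDisjOcc A ω : ℝ)}).toReal
      ≤ exp (-s * (lam + t)) * mgf (fun ω => (maxDisjOcc A ω : ℝ)) (Measure.pi μi) s :=
        measure_ge_le_exp_mul_mgf (lam + t) hs .of_finite
    _ ≤ exp (-s * (lam + t)) * exp (lam * (exp s - 1)) := by
        gcongr
        exact hlam ▸ mgf_maxDisjOcc_le hPA hA hs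
    _ = exp (-(lam * chernoffPhi (t / lam))) := by
        rw [← exp_add, hexp, mul_chernoffPhi_div, ← hs_def]
        ring_nf
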